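/- For every integer k ≥ 3, the cycle graph C_{2k} on 2k vertices is not weakly closed. -/

import Mathlib

/-! Let `a` be the vertex with the smallest label. If `x - y - a - z` is an induced path, then
`z` cannot be labelled after `y`: otherwise either `x` lies between `a` and `z`, or `z` lies
between `y` and `x`, and weak closedness forces an edge the path does not have. In a cycle of
length at least `5`, `a` is the third vertex of the two induced paths
`a - 2, a - 1, a, a + 1` and `a + 2, a + 1, a, a - 1`, so each of the two neighbours of `a`
would have to be labelled before the other. -/

/-- `G` is weakly closed: some labeling of the vertices by `1, …, n` is such that for
every edge `{i, j}` with `i < j` and every `i < k < j`, `{i,k} ∈ E(G)` or `{k,j} ∈ E(G)`. -/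
def WeaklyClosed {V : Type*} [Fintype V] (G : SimpleGraph V) : Prop :=
  ∃ σ : V ≃ Fin (Fintype.card V), ∀ i j k : V,
    G.Adj i j → σ i < σ k → σ k < σ j → G.Adj i k ∨ G.Adj k j

namespace SimpleGraph

def IsWeaklyClosedLabeling {V α : Type*} [LT α] (G : SimpleGraph V) (σ : V → α) : Prop :=
  ∀ i j k, G.Adj i j → σ i < σ k → σ k < σ j → G.Adj i k ∨ G.Adj k j

theorem IsWeaklyClosedLabeling.le_of_induced_path {V α : Type*} [LinearOrder α]
    {G : SimpleGraph V} {σ : V → α} (hσ : G.IsWeaklyClosedLabeling σ) (hinj : σ.Injective)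
    {x y a z : V} (hmin : ∀ v, σ a ≤ σ v) (hxy : G.Adj x y) (haz : G.Adj a z)
    (hxa : ¬ G.Adj x a) (hxz : ¬ G.Adj x z) (hyz : ¬ G.Adj y z) :
    σ z ≤ σ y := by
  by_contra! hyz_lt
  have hx_ne_z : x ≠ z := by rintro rfl; exact hyz hxy.symm
  rcases (hinj.ne hx_ne_z).lt_or_gt with hx | hx
  · have hax : σ a < σ x := (hmin x).lt_of_ne (hinj.ne (by rintro rfl; exact hxz haz))
    rcases hσ a z x haz hax hx with h | h
    · exact hxa h.symm
    · exact hxz h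
  · rcases hσ y x z hxy.symm hyz_lt hx with h | h
    · exact hyz h
    · exact hxz h.symm

open Fin.NatCast in
theorem cycleGraph_adj_add_natCast {n : ℕ} (b : Fin (n + 2)) {i j : ℕ}
    (hi : i < n + 2) (hj : j < n + 2) :
    (cycleGraph (n + 2)).Adj (b + (i : Fin (n + 2))) (b + (j : Fin (n + 2))) ↔
      i = j + 1 ∨ j = i + 1 ∨ i + (n + 2) = j + 1 ∨ j + (n + 2) = i + 1 := by
  have val_sub_eq_one {k l : ℕ} (hk : k < n + 2) (hl : l < n + 2) :
      ((k : Fin (n + 2)) - (l : Fin (n + 2))).val = 1 ↔ k = l + 1 ∨ k + (n + 2) = l + 1 := by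
    rcases le_or_gt (l : Fin (n + 2)) k with h | h
    · rw [Fin.coe_sub_iff_le.mpr h]
      simp only [Fin.le_def, Fin.val_natCast, Nat.mod_eq_of_lt hk, Nat.mod_eq_of_lt hl] at h ⊢
      omega
    · rw [Fin.coe_sub_iff_lt.mpr h]
      simp only [Fin.lt_def, Fin.val_natCast, Nat.mod_eq_of_lt hk, Nat.mod_eq_of_lt hl] at h ⊢
      omega
  rw [cycleGraph_adj', add_sub_add_left_eq_sub, add_sub_add_left_eq_sub, val_sub_eq_one hi hj,
    val_sub_eq_one hj hi]
  omega

open Fin.NatCast in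
theorem cycleGraph_not_weaklyClosed {n : ℕ} (hn : 5 ≤ n) : ¬ WeaklyClosed (cycleGraph n) := by
  obtain ⟨m, rfl⟩ : ∃ m, n = m + 5 := ⟨n - 5, by omega⟩
  rintro ⟨σ, hσ : IsWeaklyClosedLabeling _ σ⟩
  obtain ⟨a, hmin⟩ := Finite.exists_min σ
  let p : ℕ → Fin (m + 5) := fun i => (a - (2 : ℕ)) + (i : Fin (m + 5))
  have hp2 : p 2 = a := sub_add_cancel a _
  rw [← hp2] at hmin
  have adj (i j : ℕ) (hi : i ≤ 4 := by norm_num) (hj : j ≤ 4 := by norm_num) :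
      (cycleGraph (m + 5)).Adj (p i) (p j) ↔
        i = j + 1 ∨ j = i + 1 ∨ i + (m + 5) = j + 1 ∨ j + (m + 5) = i + 1 :=
    cycleGraph_adj_add_natCast _ (by omega) (by omega)
  have h31 : σ (p 3) ≤ σ (p 1) := IsWeaklyClosedLabeling.le_of_induced_path hσ σ.injective hmin
    ((adj 0 1).2 (by omega)) ((adj 2 3).2 (by omega))
    (by rw [adj 0 2]; omega) (by rw [adj 0 3]; omega) (by rw [adj 1 3]; omega)
  have h13 : σ (p 1) ≤ σ (p 3) := IsWeaklyClosedLabeling.le_of_induced_path hσ σ.injective hmin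
    ((adj 4 3).2 (by omega)) ((adj 2 1).2 (by omega))
    (by rw [adj 4 2]; omega) (by rw [adj 4 1]; omega) (by rw [adj 3 1]; omega)
  have hne : p 1 ≠ p 3 := fun h ↦ by
    have h03 := (adj 0 1).2 (by omega)
    rw [h, adj 0 3] at h03
    omega
  exact hne (σ.injective (h13.antisymm h31))

end SimpleGraph

/-- For `k ≥ 3`, the cycle of length `2k` is not weakly closed. -/
theorem cycleGraph_even_not_weaklyClosed (k : ℕ) (hk : 3 ≤ k) :
    ¬ WeaklyClosed (SimpleGraph.cycleGraph (2 * k)) :=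
  SimpleGraph.cycleGraph_not_weaklyClosed (by omega)
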